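/- arXiv:1904.03840 — 3 statements merged into one kernel-verified Lean document; each statement's English description precedes it below -/
import Mathlib

section
/- Let X = (S, L) be a nontrivial PBD (at least two blocks). A permutation f : S → S is a Wilson morphism from X to itself if and only if f is an automorphism of X, i.e., f maps every block of L onto a block of L. -/
/-- A subsystem of a pairwise balanced design `(S, L)`. -/
def Subsys {S : Type*} (L : Set (Set S)) (X : Set S) : Prop :=
  ∀ x ∈ X, ∀ y ∈ X, x ≠ y → ∀ B ∈ L, x ∈ B → y ∈ B → B ⊆ X

/-- An open set of a PBD: the complement of a subsystem. -/
def IsOpenSet {S : Type*} (L : Set (Set S)) (O : Set S) : Prop :=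
  Subsys L Oᶜ

/-- The domain of a partial function. -/
def pDom {S T : Type*} (f : S → Option T) : Set S := {x | f x ≠ none}

/-- The image of a partial function. -/
def pIm {S T : Type*} (f : S → Option T) : Set T := {y | ∃ x, f x = some y}

/-- The (ordinary) inverse image of a set under a partial function. -/
def pPre {S T : Type*} (f : S → Option T) (O : Set T) : Set S :=
  {x | ∃ y ∈ O, f x = some y}

/-- Wilson inverse image: ordinary inverse image together with the co-domain. -/
def pWinv {S T : Type*} (f : S → Option T) (B : Set T) : Set S :=
  {x | ∀ y, f x = some y → y ∈ B}

/-- Composition of partial functions: first `f`, then `g`. -/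
def pComp {S T U : Type*} (g : T → Option U) (f : S → Option T) : S → Option U :=
  fun x => (f x).bind g

/-- Image of a set under a partial function. -/
def imOn {S T : Type*} (f : S → Option T) (B : Set S) : Set T :=
  {y | ∃ x ∈ B, f x = some y}

/-- A Wilson morphism between PBDs: a continuous partial function, i.e. one with
open domain such that inverse images of open sets are open. -/
def Morphism {S T : Type*} (LS : Set (Set S)) (LT : Set (Set T))
    (f : S → Option T) : Prop :=
  IsOpenSet LS (pDom f) ∧ ∀ O : Set T, IsOpenSet LT O → IsOpenSet LS (pPre f O)

/-!
For a permutation `f`, being a Wilson morphism means that preimages of subsystems are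
subsystems; in particular the preimage of every block `B₀` is a subsystem, so it contains the
block `ψ B₀` through two of its points, and `f '' ψ B₀ ⊆ B₀`. Since `f '' ψ B₀` has two points,
it lies in no other block, so `ψ` is injective and hence a permutation of the finitely many
blocks. Then `∑ |ψ B₀| = ∑ |B₀|` together with `|ψ B₀| ≤ |B₀|` forces `f '' ψ B₀ = B₀`.
-/

section

variable {S T : Type*}

theorem subsys_of_mem {L : Set (Set S)}
    (hp : ∀ x y : S, x ≠ y → ∃! B, B ∈ L ∧ x ∈ B ∧ y ∈ B) {B : Set S} (hB : B ∈ L) :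
    Subsys L B := by
  intro x hx y hy hxy B' hB' hxB' hyB'
  rw [(hp x y hxy).unique ⟨hB', hxB', hyB'⟩ ⟨hB, hx, hy⟩]

theorem eq_of_subset_of_one_lt_ncard {L : Set (Set S)}
    (hp : ∀ x y : S, x ≠ y → ∃! B, B ∈ L ∧ x ∈ B ∧ y ∈ B) {s B₀ B₁ : Set S}
    (hs : 1 < s.ncard) (hB₀ : B₀ ∈ L) (hB₁ : B₁ ∈ L) (h₀ : s ⊆ B₀) (h₁ : s ⊆ B₁) :
    B₀ = B₁ := by
  obtain ⟨x, hx, y, hy, hxy⟩ := (Set.one_lt_ncard (Set.finite_of_ncard_pos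
    (zero_lt_one.trans hs))).mp hs
  exact (hp x y hxy).unique ⟨hB₀, h₀ hx, h₀ hy⟩ ⟨hB₁, h₁ hx, h₁ hy⟩

theorem pPre_some (f : S → T) (O : Set T) : pPre (fun x => some (f x)) O = f ⁻¹' O := by
  ext x
  simp [pPre]

theorem morphism_some_iff {LS : Set (Set S)} {LT : Set (Set T)} {f : S → T} :
    Morphism LS LT (fun x => some (f x)) ↔ ∀ C, Subsys LT C → Subsys LS (f ⁻¹' C) := by
  have hdom : IsOpenSet LS (pDom fun x => some (f x)) := by
    intro x hx
    simp [pDom] at hx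
  have hpre : ∀ O, IsOpenSet LS (pPre (fun x => some (f x)) O) ↔ Subsys LS (f ⁻¹' Oᶜ) := by
    intro O
    rw [IsOpenSet, pPre_some, Set.preimage_compl]
  rw [Morphism, and_iff_right hdom]
  refine ⟨fun h C hC => ?_, fun h O hO => (hpre O).mpr (h _ hO)⟩
  simpa using (hpre Cᶜ).mp (h Cᶜ (by simpa [IsOpenSet] using hC))

theorem Subsys.preimage {LS : Set (Set S)} {LT : Set (Set T)} {f : S → T}
    (hf : Function.Injective f) (hL : ∀ B ∈ LS, f '' B ∈ LT) {C : Set T}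
    (hC : Subsys LT C) : Subsys LS (f ⁻¹' C) := by
  intro x hx y hy hxy B hB hxB hyB
  rw [← Set.image_subset_iff]
  exact hC (f x) hx (f y) hy (hf.ne hxy) (f '' B) (hL B hB) ⟨x, hxB, rfl⟩ ⟨y, hyB, rfl⟩

theorem exists_mem_image_subset_of_subsys_preimage {LS : Set (Set S)}
    (hp : ∀ x y : S, x ≠ y → ∃! B, B ∈ LS ∧ x ∈ B ∧ y ∈ B) {f : S → T}
    (hf : Function.Surjective f) {B₀ : Set T} (hB₀ : 1 < B₀.ncard)
    (hsub : Subsys LS (f ⁻¹' B₀)) : ∃ B ∈ LS, f '' B ⊆ B₀ := by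
  obtain ⟨u, hu, v, hv, huv⟩ := (Set.one_lt_ncard (Set.finite_of_ncard_pos
    (zero_lt_one.trans hB₀))).mp hB₀
  obtain ⟨x, rfl⟩ := hf u
  obtain ⟨y, rfl⟩ := hf v
  have hxy : x ≠ y := fun h => huv (congrArg f h)
  obtain ⟨B, ⟨hB, hxB, hyB⟩, -⟩ := hp x y hxy
  exact ⟨B, hB, Set.image_subset_iff.mpr (hsub x hu y hv hxy B hB hxB hyB)⟩

theorem image_mem_of_forall_exists_image_subset [Finite S] {L : Set (Set S)} {f : S → S}
    (hf : Function.Injective f) (hex : ∀ B₀ ∈ L, ∃ B ∈ L, f '' B ⊆ B₀)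
    (huniq : ∀ B ∈ L, ∀ B₀ ∈ L, ∀ B₁ ∈ L, f '' B ⊆ B₀ → f '' B ⊆ B₁ → B₀ = B₁) :
    ∀ B ∈ L, f '' B ∈ L := by
  choose! ψ hψL hψsub using hex
  have hL : L.Finite := Set.toFinite L
  have hinj : Set.InjOn ψ L := fun B₀ hB₀ B₁ hB₁ h =>
    huniq (ψ B₁) (hψL B₁ hB₁) B₀ hB₀ B₁ hB₁ (h ▸ hψsub B₀ hB₀) (hψsub B₁ hB₁)
  have hbij : Set.BijOn ψ L L := (hL.injOn_iff_bijOn_of_mapsTo hψL).mp hinj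
  have hle : ∀ B₀ ∈ hL.toFinset, (ψ B₀).ncard ≤ B₀.ncard := fun B₀ hB₀ => by
    rw [← Set.ncard_image_of_injective _ hf]
    exact Set.ncard_le_ncard (hψsub B₀ (hL.mem_toFinset.mp hB₀))
  have hsum : ∑ B₀ ∈ hL.toFinset, (ψ B₀).ncard = ∑ B₀ ∈ hL.toFinset, B₀.ncard :=
    Finset.sum_nbij ψ (fun B₀ hB₀ => by simpa using hψL B₀ (by simpa using hB₀))
      (by simpa using hinj) (by simpa using hbij.surjOn) fun _ _ => rfl
  have hcard := (Finset.sum_eq_sum_iff_of_le hle).mp hsum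
  intro B hB
  obtain ⟨B₀, hB₀, rfl⟩ := hbij.surjOn hB
  rwa [Set.eq_of_subset_of_ncard_le (hψsub B₀ hB₀)
    (by rw [Set.ncard_image_of_injective _ hf, hcard B₀ (hL.mem_toFinset.mpr hB₀)])]

end

theorem stmt8_general {S : Type*} [Fintype S]
    (L : Set (Set S))
    (hb : ∀ B ∈ L, 2 ≤ B.ncard)
    (hp : ∀ x y : S, x ≠ y → ∃! B, B ∈ L ∧ x ∈ B ∧ y ∈ B)
    (f : Equiv.Perm S) :
    Morphism L L (fun x => some (f x)) ↔ ∀ B ∈ L, f '' B ∈ L := by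
  rw [morphism_some_iff]
  refine ⟨fun hM => ?_, fun hAut C hC => hC.preimage f.injective hAut⟩
  refine image_mem_of_forall_exists_image_subset f.injective (fun B₀ hB₀ => ?_)
    (fun B hB B₀ hB₀ B₁ hB₁ => eq_of_subset_of_one_lt_ncard hp ?_ hB₀ hB₁)
  · exact exists_mem_image_subset_of_subsys_preimage hp f.surjective (hb B₀ hB₀)
      (hM B₀ (subsys_of_mem hp hB₀))
  · rw [Set.ncard_image_of_injective _ f.injective]
    exact hb B hB

theorem stmt8 {S : Type*} [Fintype S]
    (L : Set (Set S))
    (hb : ∀ B ∈ L, 2 ≤ B.ncard)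
    (hp : ∀ x y : S, x ≠ y → ∃! B, B ∈ L ∧ x ∈ B ∧ y ∈ B)
    (hnontriv : ∃ B₁ ∈ L, ∃ B₂ ∈ L, B₁ ≠ B₂)
    (f : Equiv.Perm S) :
    Morphism L L (fun x => some (f x)) ↔ ∀ B ∈ L, f '' B ∈ L :=
  stmt8_general L hb hp f
end

section
/- Let X be a PBD and e an idempotent element of the Wilson monoid W(X) (i.e., e ∘ e = e as partial functions). Then the image of e is a subsystem of X. -/
/-!
The Wilson inverse image of a subsystem is a subsystem, so a block `B` meeting
`pWinv e {v}` in two points lies inside it. Taking `v` to be one of two distinct fixed points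
`x, y ∈ B` of `e` shows that `e` is defined on `B`; taking `v` a common value of two points of
`B` shows that `e` is injective on `B`; and taking the subsystem `B` itself shows `e(B) ⊆ B`.
For `z ∈ B` the point `e z ∈ B` is fixed by the idempotent `e`, so injectivity gives `e z = z`:
every block through two points of the image consists of fixed points.
-/

namespace Subsys

variable {S : Type*} {L : Set (Set S)}

theorem singleton (v : S) : Subsys L {v} := by
  rintro a rfl b rfl hab
  exact absurd rfl hab

theorem of_mem (hp : ∀ x y : S, x ≠ y → ∃! B, B ∈ L ∧ x ∈ B ∧ y ∈ B) {B : Set S}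
    (hB : B ∈ L) : Subsys L B := by
  intro p hpB q hqB hpq B' hB' hpB' hqB'
  rw [(hp p q hpq).unique ⟨hB', hpB', hqB'⟩ ⟨hB, hpB, hqB⟩]

end Subsys

section PartialFunction

variable {S T : Type*} {f : S → Option T}

theorem compl_pPre_compl (f : S → Option T) (A : Set T) : (pPre f Aᶜ)ᶜ = pWinv f A := by
  ext a
  simp only [pPre, pWinv, Set.mem_compl_iff, Set.mem_ofPred_eq]
  grind

theorem mem_pWinv_of_eq_none {x : S} (h : f x = none) (A : Set T) : x ∈ pWinv f A := by
  simp [pWinv, h]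

theorem mem_pWinv_iff_of_eq_some {x : S} {v : T} (h : f x = some v) {A : Set T} :
    x ∈ pWinv f A ↔ v ∈ A := by
  simp [pWinv, h]

theorem eq_some_of_pComp_self {e : S → Option S} (hid : pComp e e = e) {u v : S}
    (h : e u = some v) : e v = some v := by
  simpa [pComp, h] using congrFun hid u

end PartialFunction

namespace Morphism

variable {S T : Type*} {LS : Set (Set S)} {LT : Set (Set T)} {f : S → Option T}

theorem subsys_pWinv (hf : Morphism LS LT f) {A : Set T} (hA : Subsys LT A) :
    Subsys LS (pWinv f A) := by
  have hopen := hf.2 Aᶜ (by rwa [IsOpenSet, compl_compl])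
  rwa [IsOpenSet, compl_pPre_compl] at hopen

variable {B : Set S} {x y : S} {x' y' : T}

theorem ne_none_of_mem_block (hf : Morphism LS LT f) (hB : B ∈ LS) (hx : x ∈ B) (hy : y ∈ B)
    (hfx : f x = some x') (hfy : f y = some y') (hne : x' ≠ y') {z : S} (hz : z ∈ B) :
    f z ≠ none := by
  intro hfz
  have hzx : z ≠ x := by rintro rfl; simp [hfx] at hfz
  have hBx' : B ⊆ pWinv f {x'} :=
    hf.subsys_pWinv (Subsys.singleton x') z (mem_pWinv_of_eq_none hfz _) x
      (mem_pWinv_iff_of_eq_some hfx |>.mpr rfl) hzx B hB hz hx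
  exact hne (mem_pWinv_iff_of_eq_some hfy |>.mp (hBx' hy)).symm

theorem injOn_block (hf : Morphism LS LT f) (hB : B ∈ LS) (hx : x ∈ B) (hy : y ∈ B)
    (hfx : f x = some x') (hfy : f y = some y') (hne : x' ≠ y') {z w : S} (hz : z ∈ B)
    (hw : w ∈ B) {v : T} (hzv : f z = some v) (hwv : f w = some v) : z = w := by
  by_contra hzw
  have hBv : B ⊆ pWinv f {v} :=
    hf.subsys_pWinv (Subsys.singleton v) z (mem_pWinv_iff_of_eq_some hzv |>.mpr rfl) w
      (mem_pWinv_iff_of_eq_some hwv |>.mpr rfl) hzw B hB hz hw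
  exact hne ((mem_pWinv_iff_of_eq_some hfx |>.mp (hBv hx)).trans
    (mem_pWinv_iff_of_eq_some hfy |>.mp (hBv hy)).symm)

theorem eq_some_self_of_mem_block {L : Set (Set S)} {e : S → Option S} (he : Morphism L L e)
    (hid : pComp e e = e) (hB : B ∈ L) (hBsub : Subsys L B) (hxy : x ≠ y) (hx : x ∈ B)
    (hy : y ∈ B) (hex : e x = some x) (hey : e y = some y) {z : S} (hz : z ∈ B) :
    e z = some z := by
  obtain ⟨v, hzv⟩ :=
    Option.ne_none_iff_exists'.mp (he.ne_none_of_mem_block hB hx hy hex hey hxy hz)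
  have hB_pWinv : B ⊆ pWinv e B :=
    he.subsys_pWinv hBsub x (mem_pWinv_iff_of_eq_some hex |>.mpr hx) y
      (mem_pWinv_iff_of_eq_some hey |>.mpr hy) hxy B hB hx hy
  have hv : v ∈ B := mem_pWinv_iff_of_eq_some hzv |>.mp (hB_pWinv hz)
  obtain rfl := he.injOn_block hB hx hy hex hey hxy hz hv hzv (eq_some_of_pComp_self hid hzv)
  exact hzv

end Morphism

theorem stmt10_general {S : Type*}
    (L : Set (Set S))
    (hp : ∀ x y : S, x ≠ y → ∃! B, B ∈ L ∧ x ∈ B ∧ y ∈ B)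
    (e : S → Option S) (he : Morphism L L e) (hid : pComp e e = e) :
    Subsys L (pIm e) := by
  rintro x ⟨a, hax⟩ y ⟨b, hby⟩ hxy B hB hxB hyB z hz
  exact ⟨z, he.eq_some_self_of_mem_block hid hB (Subsys.of_mem hp hB) hxy hxB hyB
    (eq_some_of_pComp_self hid hax) (eq_some_of_pComp_self hid hby) hz⟩

theorem stmt10 {S : Type*} [Fintype S]
    (L : Set (Set S))
    (hb : ∀ B ∈ L, 2 ≤ B.ncard)
    (hp : ∀ x y : S, x ≠ y → ∃! B, B ∈ L ∧ x ∈ B ∧ y ∈ B)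
    (e : S → Option S) (he : Morphism L L e) (hid : pComp e e = e) :
    Subsys L (pIm e) :=
  stmt10_general L hp e he hid
end

section
/- Let X be a PBD and f a regular element of the Wilson monoid W(X), i.e., there exists g ∈ W(X) with f ∘ g ∘ f = f. Then the image of f is a subsystem of X. -/
/-!
Writing `f = f ∘ g ∘ f`, the partial map `h = f ∘ g` is continuous and idempotent, and its
fixed points are exactly the image of `f`. So it suffices that the fixed points of a continuous
idempotent partial self-map form a subsystem. Let `x ≠ y` be fixed points on a block `B`, and
suppose `b ∈ B` is not fixed. Continuity makes `B` map into `B`, and then gives a fixed point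
`p ∈ B`, `p ≠ b`, such that `h b` is undefined or equal to `p`: take `p = x` in the first case and
`p = h b` in the second. The Wilson inverse image of the subsystem `{p}` contains `b` and `p`,
hence all of `B`, which forces `x = p = y`.
-/

section PartialMaps

variable {S T U : Type*}

theorem compl_pPre (f : S → Option T) (O : Set T) : (pPre f O)ᶜ = pWinv f Oᶜ := by
  ext x
  simp only [pPre, pWinv, Set.mem_compl_iff, Set.mem_ofPred_eq, not_exists, not_and]
  exact ⟨fun h y hy hO => h y hO hy, fun h y hO hy => h y hy hO⟩

theorem pPre_pComp (f : T → Option U) (g : S → Option T) (O : Set U) :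
    pPre (pComp f g) O = pPre g (pPre f O) := by
  ext s
  cases hs : g s <;> simp [pPre, pComp, hs]

theorem mem_pIm_of_pComp_eq_some {f : T → Option U} {g : S → Option T} {s : S} {c : U}
    (hc : pComp f g s = some c) : c ∈ pIm f := by
  cases hgs : g s with
  | none => simp [pComp, hgs] at hc
  | some a => exact ⟨a, by simpa [pComp, hgs] using hc⟩

theorem pIm_eq_fixedPoints_pComp {f : S → Option T} {g : T → Option S}
    (hfgf : pComp f (pComp g f) = f) : pIm f = {y | pComp f g y = some y} := by
  ext y
  constructor
  · rintro ⟨x, hx⟩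
    simpa [pComp, hx] using congrFun hfgf x
  · exact mem_pIm_of_pComp_eq_some

end PartialMaps

section Subsystems

variable {S : Type*} {L : Set (Set S)}

theorem subsys_singleton (p : S) : Subsys L {p} := by
  rintro x rfl y rfl hxy
  exact absurd rfl hxy

theorem subsys_of_mem_blocks
    (hL : ∀ x y : S, x ≠ y → {B | B ∈ L ∧ x ∈ B ∧ y ∈ B}.Subsingleton)
    {B : Set S} (hB : B ∈ L) : Subsys L B := by
  intro x hx y hy hxy C hC hxC hyC
  rw [hL x y hxy ⟨hC, hxC, hyC⟩ ⟨hB, hx, hy⟩]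

theorem Subsys.pWinv {h : S → Option S}
    (hh : ∀ O : Set S, IsOpenSet L O → IsOpenSet L (pPre h O)) {X : Set S}
    (hX : Subsys L X) : Subsys L (pWinv h X) := by
  have := hh Xᶜ (by rwa [IsOpenSet, compl_compl])
  rwa [IsOpenSet, compl_pPre, compl_compl] at this

theorem subsys_fixedPoints
    (hL : ∀ x y : S, x ≠ y → {B | B ∈ L ∧ x ∈ B ∧ y ∈ B}.Subsingleton)
    {h : S → Option S} (hh : ∀ O : Set S, IsOpenSet L O → IsOpenSet L (pPre h O))
    (hidem : ∀ s c, h s = some c → h c = some c) :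
    Subsys L {s | h s = some s} := by
  intro x hx y hy hxy B hB hxB hyB b hb
  have hBB : B ⊆ pWinv h B :=
    (subsys_of_mem_blocks hL hB).pWinv hh x (by simp [pWinv, hx.out, hxB]) y
      (by simp [pWinv, hy.out, hyB]) hxy B hB hxB hyB
  by_contra hbfix
  obtain ⟨p, hp, hpB, hpb, hbp⟩ :
      ∃ p, h p = some p ∧ p ∈ B ∧ p ≠ b ∧ ∀ c, h b = some c → c = p := by
    cases hhb : h b with
    | none => exact ⟨x, hx, hxB, fun e => hbfix (e ▸ hx), by simp⟩
    | some c =>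
      exact ⟨c, hidem b c hhb, hBB hb c hhb, fun e => hbfix (hhb.trans (congrArg some e)),
        fun _ => Eq.symm ∘ Option.some_inj.mp⟩
  have hBp : B ⊆ pWinv h {p} :=
    (subsys_singleton p).pWinv hh b hbp p (by simp [pWinv, hp]) hpb.symm B hB hb hpB
  exact hxy ((hBp hxB x hx).trans (hBp hyB y hy).symm)

end Subsystems

theorem stmt11_general {S : Type*}
    (L : Set (Set S))
    (hp : ∀ x y : S, x ≠ y → ∃! B, B ∈ L ∧ x ∈ B ∧ y ∈ B)
    (f : S → Option S) (hf : Morphism L L f)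
    (hreg : ∃ g : S → Option S, Morphism L L g ∧ pComp f (pComp g f) = f) :
    Subsys L (pIm f) := by
  obtain ⟨g, hg, hfgf⟩ := hreg
  have hL : ∀ x y : S, x ≠ y → {B | B ∈ L ∧ x ∈ B ∧ y ∈ B}.Subsingleton :=
    fun x y hxy _ hB _ hC => (hp x y hxy).unique hB hC
  rw [pIm_eq_fixedPoints_pComp hfgf]
  refine subsys_fixedPoints hL (fun O hO => ?_) (fun s c hc => ?_)
  · rw [pPre_pComp]
    exact hg.2 _ (hf.2 _ hO)
  · exact (pIm_eq_fixedPoints_pComp hfgf).subset (mem_pIm_of_pComp_eq_some hc)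

theorem stmt11 {S : Type*} [Fintype S]
    (L : Set (Set S))
    (hb : ∀ B ∈ L, 2 ≤ B.ncard)
    (hp : ∀ x y : S, x ≠ y → ∃! B, B ∈ L ∧ x ∈ B ∧ y ∈ B)
    (f : S → Option S) (hf : Morphism L L f)
    (hreg : ∃ g : S → Option S, Morphism L L g ∧ pComp f (pComp g f) = f) :
    Subsys L (pIm f) :=
  stmt11_general L hp f hf hreg
end
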